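/- Fixed-point property and boundedness of the minimal robust positively invariant set: Let F ∈ ℝ^{n×n} admit constants C ≥ 1 and r ∈ (0,1) with ‖F^k‖ ≤ C r^k for all k ≥ 0, and let Ω₁ ⊆ ℝ^n be nonempty and bounded. Define Ω_∞ := { ∑_{k=0}^{∞} F^k w_k : (w_k)_{k≥0} a sequence with w_k ∈ Ω₁ for all k }, where each series converges absolutely in ℝ^n. Then Ω_∞ is a nonempty bounded set and satisfies the fixed-point equation F·Ω_∞ + Ω₁ = Ω_∞. -/

import Mathlib

open Matrix Pointwise

/-- Matrix–vector action on Euclidean space. -/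
noncomputable def mulVecE {n : ℕ} (G : Matrix (Fin n) (Fin n) ℝ)
    (v : EuclideanSpace ℝ (Fin n)) : EuclideanSpace ℝ (Fin n) := WithLp.toLp 2 (G *ᵥ v)

/-- Operator norm of a real matrix acting on Euclidean space. -/
noncomputable def opNorm {n : ℕ} (F : Matrix (Fin n) (Fin n) ℝ) : ℝ :=
  ‖Matrix.toEuclideanCLM (𝕜 := ℝ) (n := Fin n) F‖

/-!
Under `‖T ^ k‖ ≤ C r ^ k` with `r < 1`, every series `∑ T ^ k w_k` with all `w_k` in a bounded set
`W` (say `‖w_k‖ ≤ M`) is dominated by the geometric series `∑ C M r ^ k`, so it converges and its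
sum has norm at most `C M / (1 - r)`. Splitting off the first term,
`∑ T ^ k w_k = T (∑ T ^ k w_{k+1}) + w_0`, which gives both inclusions of `T Ω_∞ + W = Ω_∞`.
-/

/-- The paper's `Ω_∞`, for the map `T` and the disturbance set `W`. -/
def seriesSet {R E : Type*} [Semiring R] [AddCommMonoid E] [TopologicalSpace E] [Module R E]
    (T : E →L[R] E) (W : Set E) : Set E :=
  {x | ∃ w : ℕ → E, (∀ k, w k ∈ W) ∧ HasSum (fun k => (T ^ k) (w k)) x}

section FixedPoint

variable {R E : Type*} [Semiring R] [AddCommMonoid E] [TopologicalSpace E] [Module R E]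
  [ContinuousAdd E] (T : E →L[R] E)

theorem hasSum_pow_apply_of_hasSum_succ {w : ℕ → E} {y : E}
    (h : HasSum (fun k => (T ^ k) (w (k + 1))) y) :
    HasSum (fun k => (T ^ k) (w k)) (T y + w 0) := by
  have hT : HasSum (fun k => (T ^ (k + 1)) (w (k + 1))) (T y) := by
    convert T.hasSum h using 2 with k
    rw [pow_succ', mul_apply_eq_comp]
  have := HasSum.zero_add (f := fun k => (T ^ k) (w k)) hT
  rwa [pow_zero, one_apply_eq_self, add_comm] at this

theorem image_add_subset_seriesSet (W : Set E) : T '' seriesSet T W + W ⊆ seriesSet T W := by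
  rintro _ ⟨_, ⟨y, ⟨v, hv, hy⟩, rfl⟩, w₀, hw₀, rfl⟩
  let w : ℕ → E := fun
    | 0 => w₀
    | k + 1 => v k
  refine ⟨w, fun k => ?_, hasSum_pow_apply_of_hasSum_succ T hy⟩
  cases k with
  | zero => exact hw₀
  | succ k => exact hv k

theorem seriesSet_subset_image_add [T2Space E] {W : Set E}
    (hW : ∀ w : ℕ → E, (∀ k, w k ∈ W) → Summable fun k => (T ^ k) (w k)) :
    seriesSet T W ⊆ T '' seriesSet T W + W := by
  rintro x ⟨w, hw, hx⟩
  have htail := (hW _ fun k => hw (k + 1)).hasSum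
  refine ⟨T _, ⟨_, ⟨_, fun k => hw (k + 1), htail⟩, rfl⟩, w 0, hw 0, ?_⟩
  exact (hasSum_pow_apply_of_hasSum_succ T htail).unique hx

theorem image_add_seriesSet [T2Space E] {W : Set E}
    (hW : ∀ w : ℕ → E, (∀ k, w k ∈ W) → Summable fun k => (T ^ k) (w k)) :
    T '' seriesSet T W + W = seriesSet T W :=
  (image_add_subset_seriesSet T W).antisymm (seriesSet_subset_image_add T hW)

end FixedPoint

section Bounds

variable {𝕜 E : Type*} [NontriviallyNormedField 𝕜] [NormedAddCommGroup E] [NormedSpace 𝕜 E]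
  {T : E →L[𝕜] E} {C r M : ℝ} {W : Set E} {w : ℕ → E}

theorem norm_pow_apply_le (hT : ∀ k, ‖T ^ k‖ ≤ C * r ^ k) (hM : ∀ v ∈ W, ‖v‖ ≤ M)
    (hw : ∀ k, w k ∈ W) (k : ℕ) :
    ‖(T ^ k) (w k)‖ ≤ C * M * r ^ k := by
  calc ‖(T ^ k) (w k)‖ ≤ ‖T ^ k‖ * ‖w k‖ := (T ^ k).le_opNorm _
    _ ≤ C * r ^ k * M :=
      mul_le_mul (hT k) (hM _ (hw k)) (norm_nonneg _) ((norm_nonneg _).trans (hT k))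
    _ = C * M * r ^ k := by ring

theorem summable_pow_apply [CompleteSpace E] (hT : ∀ k, ‖T ^ k‖ ≤ C * r ^ k) (hr₀ : 0 ≤ r)
    (hr₁ : r < 1) (hW : Bornology.IsBounded W) (hw : ∀ k, w k ∈ W) :
    Summable fun k => (T ^ k) (w k) := by
  obtain ⟨M, hM⟩ := hW.exists_norm_le
  exact .of_norm_bounded ((summable_geometric_of_lt_one hr₀ hr₁).mul_left (C * M))
    (norm_pow_apply_le hT hM hw)

theorem norm_le_of_mem_seriesSet (hT : ∀ k, ‖T ^ k‖ ≤ C * r ^ k) (hr₀ : 0 ≤ r) (hr₁ : r < 1)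
    (hM : ∀ v ∈ W, ‖v‖ ≤ M) {x : E} (hx : x ∈ seriesSet T W) : ‖x‖ ≤ C * M * (1 - r)⁻¹ := by
  obtain ⟨w, hw, hsum⟩ := hx
  have hgeom := (hasSum_geometric_of_lt_one hr₀ hr₁).mul_left (C * M)
  rw [← hsum.tsum_eq]
  exact tsum_of_norm_bounded hgeom (norm_pow_apply_le hT hM hw)

theorem isBounded_seriesSet (hT : ∀ k, ‖T ^ k‖ ≤ C * r ^ k) (hr₀ : 0 ≤ r) (hr₁ : r < 1)
    (hW : Bornology.IsBounded W) : Bornology.IsBounded (seriesSet T W) := by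
  obtain ⟨M, hM⟩ := hW.exists_norm_le
  exact isBounded_iff_forall_norm_le.2 ⟨_, fun x => norm_le_of_mem_seriesSet hT hr₀ hr₁ hM⟩

theorem seriesSet_nonempty [CompleteSpace E] (hT : ∀ k, ‖T ^ k‖ ≤ C * r ^ k) (hr₀ : 0 ≤ r)
    (hr₁ : r < 1) (hW : Bornology.IsBounded W) (hne : W.Nonempty) : (seriesSet T W).Nonempty := by
  obtain ⟨v, hv⟩ := hne
  have hw : ∀ k : ℕ, v ∈ W := fun _ => hv
  exact ⟨_, fun _ => v, hw, (summable_pow_apply hT hr₀ hr₁ hW hw).hasSum⟩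

end Bounds

theorem mulVecE_eq_toEuclideanCLM {n : ℕ} (G : Matrix (Fin n) (Fin n) ℝ)
    (v : EuclideanSpace ℝ (Fin n)) : mulVecE G v = toEuclideanCLM (𝕜 := ℝ) G v :=
  rfl

theorem minimal_rpi_fixed_point_general
    (n : ℕ) (F : Matrix (Fin n) (Fin n) ℝ)
    (C r : ℝ) (hr : r ∈ Set.Ioo (0 : ℝ) 1)
    (hF : ∀ k : ℕ, opNorm (F ^ k) ≤ C * r ^ k)
    (Ω₁ : Set (EuclideanSpace ℝ (Fin n)))
    (hne : Ω₁.Nonempty) (hbd : Bornology.IsBounded Ω₁)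
    (Ωinf : Set (EuclideanSpace ℝ (Fin n)))
    (hΩinf : Ωinf = {x | ∃ w : ℕ → EuclideanSpace ℝ (Fin n),
      (∀ k, w k ∈ Ω₁) ∧ HasSum (fun k => mulVecE (F ^ k) (w k)) x}) :
    Ωinf.Nonempty ∧ Bornology.IsBounded Ωinf ∧
      (fun v => mulVecE F v) '' Ωinf + Ω₁ = Ωinf := by
  obtain ⟨hr₀, hr₁⟩ := hr
  set T := toEuclideanCLM (𝕜 := ℝ) F
  have hT : ∀ k, ‖T ^ k‖ ≤ C * r ^ k := fun k => by
    simpa only [opNorm, map_pow] using hF k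
  have hΩ : Ωinf = seriesSet T Ω₁ := by
    simp only [hΩinf, mulVecE_eq_toEuclideanCLM, map_pow]
    rfl
  subst hΩ
  exact ⟨seriesSet_nonempty hT hr₀.le hr₁ hbd hne, isBounded_seriesSet hT hr₀.le hr₁ hbd,
    image_add_seriesSet T fun w hw => summable_pow_apply hT hr₀.le hr₁ hbd hw⟩

/-- Fixed-point property and boundedness of the minimal robust positively invariant set. -/
theorem minimal_rpi_fixed_point
    (n : ℕ) (F : Matrix (Fin n) (Fin n) ℝ)
    (C r : ℝ) (hC : 1 ≤ C) (hr : r ∈ Set.Ioo (0 : ℝ) 1)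
    (hF : ∀ k : ℕ, opNorm (F ^ k) ≤ C * r ^ k)
    (Ω₁ : Set (EuclideanSpace ℝ (Fin n)))
    (hne : Ω₁.Nonempty) (hbd : Bornology.IsBounded Ω₁)
    (Ωinf : Set (EuclideanSpace ℝ (Fin n)))
    (hΩinf : Ωinf = {x | ∃ w : ℕ → EuclideanSpace ℝ (Fin n),
      (∀ k, w k ∈ Ω₁) ∧ HasSum (fun k => mulVecE (F ^ k) (w k)) x}) :
    Ωinf.Nonempty ∧ Bornology.IsBounded Ωinf ∧
      (fun v => mulVecE F v) '' Ωinf + Ω₁ = Ωinf :=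
  minimal_rpi_fixed_point_general n F C r hr hF Ω₁ hne hbd Ωinf hΩinf
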